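/- Let f : [0,1] → [0,1] be a piecewise continuous interval map with no connections and no periodic points, let p be a point whose forward orbit avoids the partition set D, let μ_n = (1/n) Σ_{k=0}^{n-1} δ_{f^k(p)}, and let μ be a weak* limit of a subsequence (μ_{n_j}). Then μ is f-invariant: μ(f⁻¹(B)) = μ(B) for every Borel set B ⊆ [0,1]. -/

import Mathlib

open Set Filter MeasureTheory Topology
open scoped ENNReal

/-- Data witnessing that `f` is a piecewise continuous interval map on `[0,1]`:
a partition `0 = pt 0 < pt 1 < ⋯ < pt (d+1) = 1` such that `f` is continuous on each
open subinterval and has one-sided limits `wR i` (right limit at the left endpoint)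
and `wL i` (left limit at the right endpoint) on each subinterval. -/
structure PiecewiseContData (f : ℝ → ℝ) where
  d : ℕ
  pt : Fin (d + 2) → ℝ
  mono : StrictMono pt
  first : pt 0 = 0
  last : pt (Fin.last (d + 1)) = 1
  cont : ∀ i : Fin (d + 1), ContinuousOn f (Ioo (pt i.castSucc) (pt i.succ))
  wR : Fin (d + 1) → ℝ
  wL : Fin (d + 1) → ℝ
  wR_lim : ∀ i : Fin (d + 1),
    Tendsto f (𝓝[Ioo (pt i.castSucc) (pt i.succ)] (pt i.castSucc)) (𝓝 (wR i))
  wL_lim : ∀ i : Fin (d + 1),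
    Tendsto f (𝓝[Ioo (pt i.castSucc) (pt i.succ)] (pt i.succ)) (𝓝 (wL i))

/-- The set `D` of partition points. -/
def PiecewiseContData.D {f : ℝ → ℝ} (P : PiecewiseContData f) : Set ℝ :=
  Set.range P.pt

/-- The set `W` of one-sided limit values of `f` at the partition points. -/
def PiecewiseContData.W {f : ℝ → ℝ} (P : PiecewiseContData f) : Set ℝ :=
  Set.range P.wR ∪ Set.range P.wL

/-- The no-connections condition: no forward iterate (`k ≥ 1`) of a partition point lies
in `D`, and no forward iterate (`k ≥ 0`) of a one-sided limit value lies in `D`. -/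
def PiecewiseContData.NoConnections {f : ℝ → ℝ} (P : PiecewiseContData f) : Prop :=
  (∀ i : Fin (P.d + 2), ∀ k : ℕ, 1 ≤ k → f^[k] (P.pt i) ∉ P.D) ∧
  (∀ w ∈ P.W, ∀ k : ℕ, f^[k] w ∉ P.D)

/-- `f` has no periodic points in `[0,1]`. -/
def NoPeriodicPts (f : ℝ → ℝ) : Prop :=
  ∀ x ∈ Icc (0:ℝ) 1, ∀ k : ℕ, 1 ≤ k → f^[k] x ≠ x

/-- The Birkhoff average `μ_n = (1/n) ∑_{k<n} δ_{f^k(p)}` of Dirac measures along the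
orbit of `p`. -/
noncomputable def birkhoffMeasure (f : ℝ → ℝ) (p : ℝ) (n : ℕ) : Measure ℝ :=
  (n : ℝ≥0∞)⁻¹ • ∑ k ∈ Finset.range n, Measure.dirac (f^[k] p)

/-!
Let `νⱼ` be the Birkhoff averages along the subsequence. Since `νⱼ (f⁻¹' S)` and `νⱼ S` differ
by at most `1 / n j`, the push-forwards `f_* νⱼ` also converge weakly to `μ`; as `f` is continuous
`μ`-a.e., they converge to `f_* μ` as well, so `f_* μ = μ`.

Continuity `μ`-a.e. amounts to `μ` having no atom at a partition point `c`. The orbit of `p`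
avoids `c`, so an atom at `c` is seen by the averages on one side of `c`: with upper frequency
at least `μ {c} / 2` in every one-sided neighbourhood. By the absence of connections, the orbit
of the one-sided limit `w` of `f` at `c` avoids the partition points, so each `f^[k]` is
continuous at `w` and `f^[k + 1]` maps small one-sided neighbourhoods of `c` into any
neighbourhood of `f^[k] w`. Visit frequencies are invariant under time shifts, hence
`μ {f^[k] w} ≥ μ {c} / 2` for all `k`; without periodic points these atoms are distinct, so
`μ {c} = 0`.
-/

open scoped BoundedContinuousFunction

section Measure

variable {X : Type*} [MeasurableSpace X]

theorem le_measure_singleton_of_forall_isClosed_mem_nhds [MetricSpace X]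
    [OpensMeasurableSpace X] {μ : Measure X} [IsFiniteMeasure μ] {y : X} {a : ℝ≥0∞}
    (h : ∀ F, IsClosed F → F ∈ 𝓝 y → a ≤ μ F) : a ≤ μ {y} := by
  have hlim := tendsto_measure_cthickening_of_isClosed (μ := μ) ⟨1, one_pos, measure_ne_top μ _⟩
    (isClosed_singleton (x := y))
  refine ge_of_tendsto (hlim.mono_left (nhdsWithin_le_nhds (s := Ioi 0))) ?_
  filter_upwards [self_mem_nhdsWithin] with r (hr : 0 < r)
  rw [Metric.cthickening_singleton _ hr.le]
  exact h _ Metric.isClosed_closedBall (Metric.closedBall_mem_nhds y hr)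

theorem eq_zero_of_forall_le_measure_singleton [MeasurableSingletonClass X] {μ : Measure X}
    [IsFiniteMeasure μ] {x : ℕ → X} (hx : Function.Injective x) {a : ℝ≥0∞}
    (ha : ∀ k, a ≤ μ {x k}) : a = 0 := by
  by_contra ha0
  have hdisj : Pairwise (Function.onFun Disjoint fun k => ({x k} : Set X)) :=
    fun k l hkl => Set.disjoint_singleton.mpr (hx.ne hkl)
  have : ∑' _ : ℕ, a ≤ μ (⋃ k, {x k}) := by
    rw [measure_iUnion hdisj fun _ => measurableSet_singleton _]
    exact ENNReal.tsum_le_tsum ha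
  rw [ENNReal.tsum_const_eq_top_of_ne_zero ha0, top_le_iff] at this
  exact measure_ne_top μ _ this

end Measure

-- Mathlib's `ENNReal.limsup_add_le` assumes a `CountableInterFilter`.
theorem ENNReal.limsup_add_le' {ι : Type*} {L : Filter ι} (u v : ι → ℝ≥0∞) :
    limsup (u + v) L ≤ limsup u L + limsup v L := by
  refine ENNReal.le_of_forall_pos_le_add fun ε hε hfin => ?_
  have hε2 : (0 : ℝ≥0∞) < ε / 2 := by simpa using hε.ne'
  have hu := ENNReal.lt_add_right (lt_of_le_of_lt le_self_add hfin).ne hε2.ne'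
  have hv := ENNReal.lt_add_right (lt_of_le_of_lt le_add_self hfin).ne hε2.ne'
  calc limsup (u + v) L ≤ limsup u L + ε / 2 + (limsup v L + ε / 2) :=
        limsup_le_of_le (by isBoundedDefault) <|
          ((eventually_lt_of_limsup_lt hu).and (eventually_lt_of_limsup_lt hv)).mono
            fun i h => add_le_add h.1.le h.2.le
    _ = limsup u L + limsup v L + ε := by rw [add_add_add_comm, ENNReal.add_halves]

section WeakConvergence

variable {X ι : Type*} [MeasurableSpace X] [TopologicalSpace X] [OpensMeasurableSpace X]
  {L : Filter ι} {ν : ι → ProbabilityMeasure X} {μ : ProbabilityMeasure X}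

theorem ProbabilityMeasure.tendsto_of_forall_integral_sub_tendsto_zero
    (hν : Tendsto ν L (𝓝 μ)) {ν' : ι → ProbabilityMeasure X}
    (h : ∀ φ : X →ᵇ ℝ,
      Tendsto (fun i => ∫ x, φ x ∂(ν' i : Measure X) - ∫ x, φ x ∂(ν i : Measure X)) L (𝓝 0)) :
    Tendsto ν' L (𝓝 μ) := by
  rw [ProbabilityMeasure.tendsto_iff_forall_integral_tendsto] at hν ⊢
  exact fun φ => by simpa using (h φ).add (hν φ)

theorem ProbabilityMeasure.tendsto_map_of_ae_continuousAt [HasOuterApproxClosed X]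
    [L.IsCountablyGenerated] {Y : Type*} [MeasurableSpace Y] [TopologicalSpace Y]
    [OpensMeasurableSpace Y] (hν : Tendsto ν L (𝓝 μ)) {g : X → Y}
    (hgν : ∀ i, AEMeasurable g (ν i)) (hgμ : AEMeasurable g μ)
    (hg : ∀ᵐ x ∂(μ : Measure X), ContinuousAt g x) :
    Tendsto (fun i => (ν i).map (hgν i)) L (𝓝 (μ.map hgμ)) := by
  refine tendsto_of_forall_isOpen_le_liminf' fun G hG => ?_
  have hint : g ⁻¹' G ≤ᵐ[(μ : Measure X)] interior (g ⁻¹' G) := by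
    filter_upwards [hg] with x hx hxG
    exact mem_interior_iff_mem_nhds.mpr (hx.preimage_mem_nhds (hG.mem_nhds hxG))
  simp only [ProbabilityMeasure.toMeasure_map,
    Measure.map_apply_of_aemeasurable (hgν _) hG.measurableSet,
    Measure.map_apply_of_aemeasurable hgμ hG.measurableSet]
  calc (μ : Measure X) (g ⁻¹' G) ≤ (μ : Measure X) (interior (g ⁻¹' G)) :=
        measure_mono_ae hint
    _ ≤ L.liminf fun i => (ν i : Measure X) (interior (g ⁻¹' G)) :=
      ProbabilityMeasure.le_liminf_measure_open_of_tendsto hν isOpen_interior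
    _ ≤ L.liminf fun i => (ν i : Measure X) (g ⁻¹' G) :=
      liminf_le_liminf (.of_forall fun _ => measure_mono interior_subset)

end WeakConvergence

section Birkhoff

variable {f : ℝ → ℝ} {p : ℝ}

theorem birkhoffMeasure_apply (n : ℕ) (S : Set ℝ) :
    birkhoffMeasure f p n S
      = (n : ℝ≥0∞)⁻¹ * ∑ k ∈ Finset.range n, S.indicator 1 (f^[k] p) := by
  simp [birkhoffMeasure, Measure.dirac_apply]

theorem birkhoffMeasure_eq_zero (n : ℕ) {S : Set ℝ} (hS : ∀ k, f^[k] p ∉ S) :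
    birkhoffMeasure f p n S = 0 := by
  simp [birkhoffMeasure_apply, Set.indicator_of_notMem (hS _)]

theorem isProbabilityMeasure_birkhoffMeasure {n : ℕ} (hn : n ≠ 0) :
    IsProbabilityMeasure (birkhoffMeasure f p n) :=
  ⟨by simp [birkhoffMeasure_apply, ENNReal.inv_mul_cancel (Nat.cast_ne_zero.mpr hn)]⟩

theorem integral_birkhoffMeasure (φ : ℝ → ℝ) (n : ℕ) :
    ∫ x, φ x ∂birkhoffMeasure f p n = (n : ℝ)⁻¹ * ∑ k ∈ Finset.range n, φ (f^[k] p) := by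
  rw [birkhoffMeasure, integral_smul_measure,
    integral_finsetSum_measure fun k _ => integrable_dirac (by simp)]
  simp [integral_dirac]

theorem integral_comp_birkhoffMeasure_sub (φ : ℝ → ℝ) (n : ℕ) :
    ∫ x, φ (f x) ∂birkhoffMeasure f p n - ∫ x, φ x ∂birkhoffMeasure f p n
      = (n : ℝ)⁻¹ * (φ (f^[n] p) - φ p) := by
  simp only [integral_birkhoffMeasure, ← mul_sub, ← Finset.sum_sub_distrib,
    ← Function.iterate_succ_apply' f]
  rw [Finset.sum_range_sub (fun k => φ (f^[k] p)), Function.iterate_zero_apply]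

theorem tendsto_integral_comp_birkhoffMeasure_sub {N : ℕ → ℕ} (hN : Tendsto N atTop atTop)
    (φ : ℝ →ᵇ ℝ) :
    Tendsto (fun j => ∫ x, φ (f x) ∂birkhoffMeasure f p (N j)
      - ∫ x, φ x ∂birkhoffMeasure f p (N j)) atTop (𝓝 0) := by
  simp_rw [integral_comp_birkhoffMeasure_sub]
  refine (tendsto_inv_atTop_zero.comp (tendsto_natCast_atTop_atTop.comp hN))
    |>.zero_mul_isBoundedUnder_le (isBoundedUnder_of ⟨2 * ‖φ‖, fun j => ?_⟩)
  exact (dist_eq_norm _ _).symm.trans_le (φ.dist_le_two_norm _ _)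

theorem birkhoffMeasure_preimage_iterate_le (n k : ℕ) (S : Set ℝ) :
    birkhoffMeasure f p n (f^[k] ⁻¹' S) ≤ birkhoffMeasure f p n S + k / n := by
  set a : ℕ → ℝ≥0∞ := fun i => S.indicator 1 (f^[i] p)
  have hshift : ∑ i ∈ Finset.range n, a (k + i) ≤ ∑ i ∈ Finset.range n, a i + k :=
    calc ∑ i ∈ Finset.range n, a (k + i)
        ≤ ∑ i ∈ Finset.range k, a i + ∑ i ∈ Finset.range n, a (k + i) := le_add_self
      _ = ∑ i ∈ Finset.range n, a i + ∑ i ∈ Finset.range k, a (n + i) := by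
        rw [← Finset.sum_range_add, ← Finset.sum_range_add, add_comm]
      _ ≤ ∑ i ∈ Finset.range n, a i + k := by
        gcongr
        refine (Finset.sum_le_card_nsmul _ _ 1 fun i _ => ?_).trans (by simp)
        exact Set.indicator_le_self' (fun _ _ => zero_le_one) _
  have hpre : ∀ i, (f^[k] ⁻¹' S).indicator 1 (f^[i] p) = a (k + i) := fun i => by
    simp only [a, Function.iterate_add_apply]
    exact Set.indicator_comp_right (g := 1) _
  simp only [birkhoffMeasure_apply, hpre]
  calc (n : ℝ≥0∞)⁻¹ * ∑ i ∈ Finset.range n, a (k + i)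
      ≤ (n : ℝ≥0∞)⁻¹ * (∑ i ∈ Finset.range n, a i + k) := by gcongr
    _ = (n : ℝ≥0∞)⁻¹ * ∑ i ∈ Finset.range n, a i + k / n := by
      rw [mul_add, ENNReal.div_eq_inv_mul]

end Birkhoff

noncomputable def birkhoffLimsup (f : ℝ → ℝ) (p : ℝ) (N : ℕ → ℕ) (S : Set ℝ) : ℝ≥0∞ :=
  limsup (fun j => birkhoffMeasure f p (N j) S) atTop

section BirkhoffLimsup

variable {f : ℝ → ℝ} {p : ℝ} {N : ℕ → ℕ}

theorem birkhoffLimsup_mono {S T : Set ℝ} (h : S ⊆ T) :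
    birkhoffLimsup f p N S ≤ birkhoffLimsup f p N T :=
  limsup_le_limsup (.of_forall fun _ => measure_mono h)

theorem birkhoffLimsup_union_le (S T : Set ℝ) :
    birkhoffLimsup f p N (S ∪ T) ≤ birkhoffLimsup f p N S + birkhoffLimsup f p N T :=
  (limsup_le_limsup (.of_forall fun _ => measure_union_le S T)).trans
    (ENNReal.limsup_add_le' _ _)

theorem birkhoffLimsup_eq_zero {S : Set ℝ} (hS : ∀ k, f^[k] p ∉ S) :
    birkhoffLimsup f p N S = 0 := by
  simp [birkhoffLimsup, birkhoffMeasure_eq_zero _ hS]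

theorem birkhoffLimsup_preimage_iterate_le (hN : Tendsto N atTop atTop) (k : ℕ) (S : Set ℝ) :
    birkhoffLimsup f p N (f^[k] ⁻¹' S) ≤ birkhoffLimsup f p N S := by
  have hvanish : Tendsto (fun j => (k : ℝ≥0∞) / N j) atTop (𝓝 0) := by
    simpa using ENNReal.Tendsto.const_div (ENNReal.tendsto_nat_nhds_top.comp hN)
      (Or.inr (ENNReal.natCast_ne_top k))
  calc birkhoffLimsup f p N (f^[k] ⁻¹' S)
      ≤ limsup ((fun j => birkhoffMeasure f p (N j) S) + fun j => (k : ℝ≥0∞) / N j) atTop :=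
        limsup_le_limsup (.of_forall fun _ => birkhoffMeasure_preimage_iterate_le _ _ _)
    _ = birkhoffLimsup f p N S := ENNReal.limsup_add_of_right_tendsto_zero hvanish _

end BirkhoffLimsup

theorem NoPeriodicPts.injective_iterate {f : ℝ → ℝ} (hnp : NoPeriodicPts f)
    (hf : MapsTo f (Icc (0:ℝ) 1) (Icc (0:ℝ) 1)) {w : ℝ} (hw : w ∈ Icc (0:ℝ) 1) :
    Function.Injective fun k => f^[k] w := by
  refine Function.Injective.of_lt_imp_ne fun k l hkl heq => ?_
  refine hnp _ (hf.iterate k hw) (l - k) (by omega) ?_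
  rw [← Function.iterate_add_apply, Nat.sub_add_cancel hkl.le]
  exact heq.symm

namespace PiecewiseContData

variable {f : ℝ → ℝ} (P : PiecewiseContData f)

theorem pt_mem_Icc (i : Fin (P.d + 2)) : P.pt i ∈ Icc (0:ℝ) 1 :=
  ⟨P.first ▸ P.mono.monotone (Fin.zero_le i), P.last ▸ P.mono.monotone (Fin.le_last i)⟩

theorem Ioo_subset_Icc (i j : Fin (P.d + 2)) : Ioo (P.pt i) (P.pt j) ⊆ Icc (0:ℝ) 1 :=
  Ioo_subset_Icc_self.trans (Icc_subset_Icc (P.pt_mem_Icc i).1 (P.pt_mem_Icc j).2)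

theorem exists_mem_Ioo {x : ℝ} (hx : x ∈ Icc (0:ℝ) 1) (hxD : x ∉ P.D) :
    ∃ i : Fin (P.d + 1), x ∈ Ioo (P.pt i.castSucc) (P.pt i.succ) := by
  classical
  have hne : (Finset.univ.filter fun j => x < P.pt j).Nonempty :=
    ⟨Fin.last _, by simpa [P.last] using hx.2.lt_of_ne fun h => hxD ⟨_, P.last.trans h.symm⟩⟩
  set j := (Finset.univ.filter fun j => x < P.pt j).min' hne
  have hj : x < P.pt j := (Finset.mem_filter.mp (Finset.min'_mem _ hne)).2
  obtain ⟨i, hi⟩ : ∃ i, Fin.succ i = j :=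
    Fin.exists_succ_eq.mpr fun h0 => (hx.1.trans_lt hj).ne' (h0 ▸ P.first)
  refine ⟨i, lt_of_le_of_ne ?_ fun h => hxD ⟨_, h⟩, hi ▸ hj⟩
  by_contra! h
  exact (Fin.castSucc_lt_succ (i := i)).not_ge (hi ▸ Finset.min'_le _ _ (by simpa using h))

theorem continuousAt {x : ℝ} (hx : x ∈ Icc (0:ℝ) 1) (hxD : x ∉ P.D) : ContinuousAt f x :=
  let ⟨i, hi⟩ := P.exists_mem_Ioo hx hxD
  (P.cont i).continuousAt (isOpen_Ioo.mem_nhds hi)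

theorem continuousAt_iterate (hf : MapsTo f (Icc (0:ℝ) 1) (Icc (0:ℝ) 1)) {w : ℝ}
    (hw : w ∈ Icc (0:ℝ) 1) (hwD : ∀ k, f^[k] w ∉ P.D) (k : ℕ) : ContinuousAt f^[k] w := by
  induction k with
  | zero => exact continuousAt_id
  | succ k ih =>
    rw [Function.iterate_succ']
    exact (P.continuousAt (hf.iterate k hw) (hwD k)).comp ih

theorem tendsto_nhdsLT (i : Fin (P.d + 1)) : Tendsto f (𝓝[<] (P.pt i.succ)) (𝓝 (P.wL i)) := by
  simpa only [nhdsWithin_Ioo_eq_nhdsLT (P.mono (Fin.castSucc_lt_succ (i := i)))] using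
    P.wL_lim i

theorem tendsto_nhdsGT (i : Fin (P.d + 1)) :
    Tendsto f (𝓝[>] (P.pt i.castSucc)) (𝓝 (P.wR i)) := by
  simpa only [nhdsWithin_Ioo_eq_nhdsGT (P.mono (Fin.castSucc_lt_succ (i := i)))] using
    P.wR_lim i

theorem W_subset_Icc (hf : MapsTo f (Icc (0:ℝ) 1) (Icc (0:ℝ) 1)) : P.W ⊆ Icc (0:ℝ) 1 := by
  have hlt (i : Fin (P.d + 1)) := P.mono (Fin.castSucc_lt_succ (i := i))
  rintro w (⟨i, rfl⟩ | ⟨i, rfl⟩)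
  · exact isClosed_Icc.mem_of_tendsto (P.tendsto_nhdsGT i)
      (mem_of_superset (Ioo_mem_nhdsGT (hlt i)) fun x hx => hf (P.Ioo_subset_Icc _ _ hx))
  · exact isClosed_Icc.mem_of_tendsto (P.tendsto_nhdsLT i)
      (mem_of_superset (Ioo_mem_nhdsLT (hlt i)) fun x hx => hf (P.Ioo_subset_Icc _ _ hx))

end PiecewiseContData

section Atoms

variable {f : ℝ → ℝ} {p : ℝ} {N : ℕ → ℕ} {μ : Measure ℝ}

theorem le_measure_singleton_iterate [IsFiniteMeasure μ]
    (hclosed : ∀ F, IsClosed F → birkhoffLimsup f p N F ≤ μ F) (hN : Tendsto N atTop atTop)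
    {l : Filter ℝ} {w : ℝ} (hfw : Tendsto f l (𝓝 w)) (hcont : ∀ k, ContinuousAt f^[k] w)
    {a : ℝ≥0∞} (ha : ∀ s ∈ l, a ≤ birkhoffLimsup f p N s) (k : ℕ) : a ≤ μ {f^[k] w} := by
  refine le_measure_singleton_of_forall_isClosed_mem_nhds fun F hF hFw => ?_
  have hk : Tendsto f^[k + 1] l (𝓝 (f^[k] w)) := by
    rw [Function.iterate_succ]
    exact (hcont k).tendsto.comp hfw
  calc a ≤ birkhoffLimsup f p N (f^[k + 1] ⁻¹' F) := ha _ (hk hFw)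
    _ ≤ birkhoffLimsup f p N F := birkhoffLimsup_preimage_iterate_le hN _ _
    _ ≤ μ F := hclosed F hF

theorem half_measure_le_birkhoffLimsup_nhdsLT_or_nhdsGT
    (hopen : ∀ G, IsOpen G → μ G ≤ birkhoffLimsup f p N G) {c : ℝ} (hc : ∀ k, f^[k] p ≠ c) :
    (∀ s ∈ 𝓝[<] c, μ {c} / 2 ≤ birkhoffLimsup f p N s) ∨
      (∀ t ∈ 𝓝[>] c, μ {c} / 2 ≤ birkhoffLimsup f p N t) := by
  by_contra! h
  obtain ⟨⟨s, hs, hs'⟩, ⟨t, ht, ht'⟩⟩ := h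
  have hnhds : insert c (s ∪ t) ∈ 𝓝 c :=
    insert_mem_nhds_iff.mpr (nhdsLT_sup_nhdsGT c ▸ union_mem_sup hs ht)
  obtain ⟨G, hGsub, hG, hcG⟩ := mem_nhds_iff.mp hnhds
  refine (lt_irrefl (μ {c})) ?_
  calc μ {c} ≤ μ G := measure_mono (singleton_subset_iff.mpr hcG)
    _ ≤ birkhoffLimsup f p N ({c} ∪ (s ∪ t)) := (hopen G hG).trans (birkhoffLimsup_mono hGsub)
    _ ≤ birkhoffLimsup f p N s + birkhoffLimsup f p N t := by
      refine (birkhoffLimsup_union_le _ _).trans ?_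
      rw [birkhoffLimsup_eq_zero hc, zero_add]
      exact birkhoffLimsup_union_le _ _
    _ < μ {c} / 2 + μ {c} / 2 := ENNReal.add_lt_add hs' ht'
    _ = μ {c} := ENNReal.add_halves _

theorem measure_singleton_pt_eq_zero (hf : MapsTo f (Icc (0:ℝ) 1) (Icc (0:ℝ) 1))
    (P : PiecewiseContData f) (hnc : P.NoConnections) (hnp : NoPeriodicPts f)
    (hp : p ∈ Icc (0:ℝ) 1) (hporb : ∀ k : ℕ, f^[k] p ∉ P.D) (hN : Tendsto N atTop atTop)
    [IsFiniteMeasure μ] (hclosed : ∀ F, IsClosed F → birkhoffLimsup f p N F ≤ μ F)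
    (hopen : ∀ G, IsOpen G → μ G ≤ birkhoffLimsup f p N G) (i : Fin (P.d + 2)) :
    μ {P.pt i} = 0 := by
  have hW {l : Filter ℝ} {w : ℝ} (hw : w ∈ P.W) (hfw : Tendsto f l (𝓝 w))
      (ha : ∀ s ∈ l, μ {P.pt i} / 2 ≤ birkhoffLimsup f p N s) : μ {P.pt i} / 2 = 0 :=
    have hwI := P.W_subset_Icc hf hw
    eq_zero_of_forall_le_measure_singleton (hnp.injective_iterate hf hwI)
      (le_measure_singleton_iterate hclosed hN hfw (P.continuousAt_iterate hf hwI (hnc.2 w hw)) ha)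
  have hout {S : Set ℝ} (hS : Disjoint S (Icc 0 1)) : birkhoffLimsup f p N S = 0 :=
    birkhoffLimsup_eq_zero fun k hk => hS.notMem_of_mem_right (hf.iterate k hp) hk
  suffices μ {P.pt i} / 2 = 0 by simpa using this
  rcases half_measure_le_birkhoffLimsup_nhdsLT_or_nhdsGT hopen fun k h => hporb k ⟨i, h.symm⟩
    with hL | hR
  · induction i using Fin.cases with
    | zero =>
      refine nonpos_iff_eq_zero.mp ((hL _ self_mem_nhdsWithin).trans_eq (hout ?_))
      rw [P.first]
      exact disjoint_left.mpr fun x hx h => (not_le.mpr hx) h.1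
    | succ j => exact hW (Or.inr ⟨j, rfl⟩) (P.tendsto_nhdsLT j) hL
  · induction i using Fin.lastCases with
    | last =>
      refine nonpos_iff_eq_zero.mp ((hR _ self_mem_nhdsWithin).trans_eq (hout ?_))
      rw [P.last]
      exact disjoint_left.mpr fun x hx h => (not_le.mpr hx) h.2
    | cast j => exact hW (Or.inl ⟨j, rfl⟩) (P.tendsto_nhdsGT j) hR

theorem ae_mem_Icc_diff_D (hf : MapsTo f (Icc (0:ℝ) 1) (Icc (0:ℝ) 1))
    (P : PiecewiseContData f) (hnc : P.NoConnections) (hnp : NoPeriodicPts f)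
    (hp : p ∈ Icc (0:ℝ) 1) (hporb : ∀ k : ℕ, f^[k] p ∉ P.D) (hN : Tendsto N atTop atTop)
    [IsFiniteMeasure μ] (hclosed : ∀ F, IsClosed F → birkhoffLimsup f p N F ≤ μ F)
    (hopen : ∀ G, IsOpen G → μ G ≤ birkhoffLimsup f p N G) :
    ∀ᵐ x ∂μ, x ∈ Icc (0:ℝ) 1 \ P.D := by
  have hIcc : μ (Icc (0:ℝ) 1)ᶜ = 0 := nonpos_iff_eq_zero.mp <|
    (hopen _ isClosed_Icc.isOpen_compl).trans_eq
      (birkhoffLimsup_eq_zero fun k hk => hk (hf.iterate k hp))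
  have hD : μ P.D = 0 := by
    rw [PiecewiseContData.D, ← Set.iUnion_singleton_eq_range]
    exact measure_iUnion_null (measure_singleton_pt_eq_zero hf P hnc hnp hp hporb hN hclosed hopen)
  refine measure_mono_null (fun x hx => ?_) (measure_union_null hIcc hD)
  by_cases hxI : x ∈ Icc (0:ℝ) 1
  · exact Or.inr (not_not.mp fun hxD => hx ⟨hxI, hxD⟩)
  · exact Or.inl hxI

end Atoms

/-- any weak* limit `μ` of a subsequence of the Birkhoff averages along the
orbit of `p` (whose orbit avoids the partition set `D`) is `f`-invariant. -/
theorem stmt8 (f : ℝ → ℝ) (hf : MapsTo f (Icc (0:ℝ) 1) (Icc (0:ℝ) 1))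
    (P : PiecewiseContData f) (hnc : P.NoConnections) (hnp : NoPeriodicPts f)
    (p : ℝ) (hp : p ∈ Icc (0:ℝ) 1) (hporb : ∀ k : ℕ, f^[k] p ∉ P.D)
    (n : ℕ → ℕ) (hn : StrictMono n) (μ : Measure ℝ) (hμ : IsProbabilityMeasure μ)
    (hconv : ∀ φ : ℝ → ℝ, Continuous φ →
      Tendsto (fun j => ∫ x, φ x ∂(birkhoffMeasure f p (n j))) atTop
        (𝓝 (∫ x, φ x ∂μ))) :
    ∀ B : Set ℝ, MeasurableSet B → μ (f ⁻¹' B) = μ B := by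
  -- `n 0` may vanish, making the first average the zero measure; drop it.
  set N := fun j => n (j + 1)
  have hN : Tendsto N atTop atTop := hn.tendsto_atTop.comp (tendsto_add_atTop_nat 1)
  let ν (j : ℕ) : ProbabilityMeasure ℝ :=
    ⟨birkhoffMeasure f p (N j), isProbabilityMeasure_birkhoffMeasure (hn j.lt_succ_self).ne_bot⟩
  let μ' : ProbabilityMeasure ℝ := ⟨μ, hμ⟩
  have hν : Tendsto ν atTop (𝓝 μ') := ProbabilityMeasure.tendsto_iff_forall_integral_tendsto.mpr
    fun φ => (hconv φ φ.continuous).comp (tendsto_add_atTop_nat 1)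
  set E := Icc (0:ℝ) 1 \ P.D
  have hμE : ∀ᵐ x ∂μ, x ∈ E := ae_mem_Icc_diff_D hf P hnc hnp hp hporb hN
    (fun F hF => ProbabilityMeasure.limsup_measure_closed_le_of_tendsto hν hF)
    (fun G hG => (ProbabilityMeasure.le_liminf_measure_open_of_tendsto hν hG).trans
      liminf_le_limsup)
  have hνE (j : ℕ) : ∀ᵐ x ∂(ν j : Measure ℝ), x ∈ E :=
    birkhoffMeasure_eq_zero _ fun k hk => hk ⟨hf.iterate k hp, hporb k⟩
  have hfE : ContinuousOn f E := fun x hx => (P.continuousAt hx.1 hx.2).continuousWithinAt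
  have hEm : MeasurableSet E := measurableSet_Icc.diff (Set.finite_range P.pt).measurableSet
  have hfμ : AEMeasurable f μ := Measure.restrict_eq_self_of_ae_mem hμE ▸ hfE.aemeasurable hEm
  have hfν (j : ℕ) : AEMeasurable f (ν j) :=
    Measure.restrict_eq_self_of_ae_mem (hνE j) ▸ hfE.aemeasurable hEm
  have hmap : Tendsto (fun j => (ν j).map (hfν j)) atTop (𝓝 (μ'.map hfμ)) :=
    ProbabilityMeasure.tendsto_map_of_ae_continuousAt hν hfν hfμ
      (hμE.mono fun x hx => P.continuousAt hx.1 hx.2)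
  have hshift : Tendsto (fun j => (ν j).map (hfν j)) atTop (𝓝 μ') :=
    ProbabilityMeasure.tendsto_of_forall_integral_sub_tendsto_zero hν fun φ => by
      simp only [ProbabilityMeasure.toMeasure_map,
        integral_map (hfν _) φ.continuous.aestronglyMeasurable]
      exact tendsto_integral_comp_birkhoffMeasure_sub hN φ
  intro B hB
  rw [← Measure.map_apply_of_aemeasurable hfμ hB]
  exact congrArg (fun ρ : ProbabilityMeasure ℝ => (ρ : Measure ℝ) B)
    (tendsto_nhds_unique hmap hshift)
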